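/- For 0 ≤ x < 1 and s ∈ [0,π], let P₁(x,s) = (2/π)·x(1−x)(1−x²)·sin s / (1 − 2x cos s + x²)². Then for every continuous function φ : [0,π] → ℝ, lim_{x→1⁻} ∫₀^π P₁(x,s) φ(s) ds = (2/π) φ(0). -/

import Mathlib

open MeasureTheory Filter Topology Real intervalIntegral

noncomputable section

/-- The kernel `P₁(x,s) = -(1-x) ∂_s P₀(x,s)` where `P₀` is the Poisson kernel. -/
def P1 (x s : ℝ) : ℝ :=
  (2 / π) * (x * (1 - x) * (1 - x ^ 2) * Real.sin s / (1 - 2 * x * Real.cos s + x ^ 2) ^ 2)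

/-!
Since `P₁(x,·) = -(1-x) ∂ₛP₀(x,·)`, its integral over `[0,π]` is
`(1-x)(P₀(x,0) - P₀(x,π)) = 4x/(π(1+x)) → 2/π`. The kernel is nonnegative on `[0,π]`, and for
`x ≥ 1/2` its denominator is at least `(1 - cos s)²`, so away from `s = 0` the factor `1 - x` makes
`P₁(x,·)` tend to `0` uniformly. Thus `P₁(x,·)` concentrates the mass `2/π` at `0`, and the
peak-function argument applies.
-/

open Set

theorem tendstoUniformlyOn_zero_of_abs_le {ι α : Type*} {l : Filter ι} {F : ι → α → ℝ}
    {S : Set α} {bound : ι → ℝ} (hbound : Tendsto bound l (𝓝 0))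
    (hF : ∀ᶠ i in l, ∀ s ∈ S, |F i s| ≤ bound i) : TendstoUniformlyOn F 0 l S := by
  rw [Metric.tendstoUniformlyOn_iff]
  intro ε hε
  filter_upwards [hF, hbound.eventually (gt_mem_nhds hε)] with i hi hε' s hs
  simpa [dist_eq] using (hi s hs).trans_lt hε'

theorem tendsto_intervalIntegral_mul_of_peak {ι : Type*} {l : Filter ι} {K : ι → ℝ → ℝ}
    {g : ℝ → ℝ} {a b c L : ℝ} (hab : a ≤ b) (hc : 0 < c)
    (hK_nonneg : ∀ᶠ i in l, ∀ s ∈ Ioc a b, 0 ≤ K i s)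
    (hK_meas : ∀ᶠ i in l, AEStronglyMeasurable (K i) (volume.restrict (Ioc a b)))
    (hK_small : ∀ δ > 0, TendstoUniformlyOn K 0 l (Icc (a + δ) b))
    (hK_int : Tendsto (fun i => ∫ s in a..b, K i s) l (𝓝 c))
    (hg_int : IntervalIntegrable g volume a b) (hg_lim : Tendsto g (𝓝[>] a) (𝓝 L)) :
    Tendsto (fun i => ∫ s in a..b, K i s * g s) l (𝓝 (c * L)) := by
  have hsmall : ∀ u : Set ℝ, IsOpen u → a ∈ u →
      TendstoUniformlyOn (fun i s => c⁻¹ * K i s) 0 l (Ioc a b \ u) := by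
    intro u hu hau
    obtain ⟨δ, hδ, hball⟩ := Metric.isOpen_iff.1 hu a hau
    have hsub : Ioc a b \ u ⊆ Icc (a + δ) b := by
      rintro s ⟨⟨has, hsb⟩, hsu⟩
      refine ⟨?_, hsb⟩
      by_contra! h
      exact hsu (hball (by rw [Metric.mem_ball, dist_eq, abs_of_pos (sub_pos.2 has)]; linarith))
    simpa only [Function.comp_def, smul_eq_mul, Pi.zero_apply, mul_zero, Pi.zero_def] using
      (uniformContinuous_const_smul c⁻¹).comp_tendstoUniformlyOn
      ((hK_small δ hδ).mono hsub)
  have hpeak := tendsto_setIntegral_peak_smul_of_integrableOn_of_tendsto (μ := volume)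
    (φ := fun i s => c⁻¹ * K i s) (x₀ := a) measurableSet_Ioc measurableSet_Ioc subset_rfl
    self_mem_nhdsWithin measure_Ioc_lt_top.ne
    (hK_nonneg.mono fun i hi s hs => mul_nonneg (inv_nonneg.2 hc.le) (hi s hs)) hsmall
    (by simpa [← intervalIntegral.integral_of_le hab, hc.ne'] using hK_int.const_mul c⁻¹)
    (hK_meas.mono fun i hi => hi.const_mul _) hg_int.1
    (hg_lim.mono_left (nhdsWithin_mono _ Ioc_subset_Ioi_self))
  convert hpeak.const_mul c using 1
  ext i
  rw [intervalIntegral.integral_of_le hab, ← MeasureTheory.integral_const_mul]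
  congr 1 with s
  rw [smul_eq_mul]
  field_simp

def P0 (x s : ℝ) : ℝ := (1 / π) * ((1 - x ^ 2) / (1 - 2 * x * cos s + x ^ 2))

lemma one_sub_two_mul_cos_add_sq_eq (x s : ℝ) :
    1 - 2 * x * cos s + x ^ 2 = (1 - x) ^ 2 + 2 * x * (1 - cos s) := by
  ring

lemma one_sub_two_mul_cos_add_sq_pos {x : ℝ} (hx0 : 0 ≤ x) (hx1 : x < 1) (s : ℝ) :
    0 < 1 - 2 * x * cos s + x ^ 2 := by
  rw [one_sub_two_mul_cos_add_sq_eq]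
  have := sub_nonneg.2 (cos_le_one s)
  have := sub_pos.2 hx1
  positivity

lemma continuous_P1 {x : ℝ} (hx0 : 0 ≤ x) (hx1 : x < 1) : Continuous (P1 x) :=
  continuous_const.mul <| .div (by fun_prop) (by fun_prop) fun s =>
    pow_ne_zero _ (one_sub_two_mul_cos_add_sq_pos hx0 hx1 s).ne'

lemma hasDerivAt_P0_mul {x : ℝ} (hx0 : 0 ≤ x) (hx1 : x < 1) (s : ℝ) :
    HasDerivAt (fun s => -(1 - x) * P0 x s) (P1 x s) s := by
  have hD := one_sub_two_mul_cos_add_sq_pos hx0 hx1 s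
  have h := ((((hasDerivAt_cos s).const_mul (2 * x)).const_sub 1).add_const (x ^ 2)).inv hD.ne'
  have hfun : (fun s => -(1 - x) * P0 x s) =
      fun s => -(1 - x) * ((1 - x ^ 2) / π * (fun s => 1 - 2 * x * cos s + x ^ 2)⁻¹ s) := by
    funext s
    simp only [P0, Pi.inv_apply]
    ring
  rw [hfun]
  refine ((h.const_mul ((1 - x ^ 2) / π)).const_mul (-(1 - x))).congr_deriv ?_
  unfold P1
  field_simp

lemma integral_P1 {x : ℝ} (hx0 : 0 ≤ x) (hx1 : x < 1) :
    ∫ s in (0 : ℝ)..π, P1 x s = 4 * x / (π * (1 + x)) := by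
  rw [integral_eq_sub_of_hasDerivAt (fun s _ => hasDerivAt_P0_mul hx0 hx1 s)
    ((continuous_P1 hx0 hx1).intervalIntegrable 0 π)]
  have h1 : (1 : ℝ) - x ≠ 0 := by linarith
  have h2 : (1 : ℝ) + x ≠ 0 := by linarith
  simp only [P0, cos_pi, cos_zero]
  rw [show 1 - 2 * x * (-1 : ℝ) + x ^ 2 = (1 + x) ^ 2 by ring,
    show 1 - 2 * x * (1 : ℝ) + x ^ 2 = (1 - x) ^ 2 by ring]
  field_simp
  ring

lemma tendsto_integral_P1 :
    Tendsto (fun x => ∫ s in (0 : ℝ)..π, P1 x s) (𝓝[<] 1) (𝓝 (2 / π)) := by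
  have hcont : ContinuousAt (fun x : ℝ => 4 * x / (π * (1 + x))) 1 :=
    .div (by fun_prop) (by fun_prop) (by positivity)
  have hlim := hcont.tendsto.mono_left (nhdsWithin_le_nhds (s := Iio 1))
  rw [show 4 * 1 / (π * (1 + 1)) = 2 / π by ring] at hlim
  refine hlim.congr' ?_
  filter_upwards [Ioo_mem_nhdsLT (show (0 : ℝ) < 1 by norm_num)] with x hx
  exact (integral_P1 hx.1.le hx.2).symm

lemma P1_nonneg {x s : ℝ} (hx0 : 0 ≤ x) (hx1 : x ≤ 1) (hs0 : 0 ≤ s) (hsπ : s ≤ π) :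
    0 ≤ P1 x s := by
  have h1 : 0 ≤ 1 - x := by linarith
  have h2 : 0 ≤ 1 - x ^ 2 := by nlinarith
  have := sin_nonneg_of_nonneg_of_le_pi hs0 hsπ
  unfold P1
  positivity

lemma P1_le {x s : ℝ} (hx0 : 1 / 2 ≤ x) (hx1 : x ≤ 1) (hs0 : 0 < s) (hsπ : s ≤ π) :
    P1 x s ≤ 2 / π * ((1 - x) / (1 - cos s) ^ 2) := by
  have hcos : 0 < 1 - cos s := by
    have := cos_lt_cos_of_nonneg_of_le_pi le_rfl hsπ hs0
    rw [cos_zero] at this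
    linarith
  have hnum : x * (1 - x) * (1 - x ^ 2) * sin s ≤ 1 - x := by
    have hx : x * (1 - x ^ 2) ≤ 1 := by nlinarith
    calc x * (1 - x) * (1 - x ^ 2) * sin s = (1 - x) * (x * (1 - x ^ 2) * sin s) := by ring
      _ ≤ (1 - x) * 1 := by
        gcongr
        exact mul_le_one₀ hx (sin_nonneg_of_nonneg_of_le_pi hs0.le hsπ) (sin_le_one s)
      _ = 1 - x := mul_one _
  have hden : 1 - cos s ≤ 1 - 2 * x * cos s + x ^ 2 := by
    rw [one_sub_two_mul_cos_add_sq_eq]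
    nlinarith [sq_nonneg (1 - x)]
  unfold P1
  gcongr

lemma tendstoUniformlyOn_P1 {δ : ℝ} (hδ : 0 < δ) :
    TendstoUniformlyOn P1 0 (𝓝[<] 1) (Icc δ π) := by
  set δ' := min δ π
  have hc : 0 < 1 - cos δ' := by
    have := cos_lt_cos_of_nonneg_of_le_pi le_rfl (min_le_right δ π) (lt_min hδ pi_pos)
    rw [cos_zero] at this
    linarith
  refine tendstoUniformlyOn_zero_of_abs_le
    (bound := fun x => 2 / π * ((1 - x) / (1 - cos δ') ^ 2)) ?_ ?_
  · exact (Continuous.tendsto' (by fun_prop) 1 0 (by simp)).mono_left nhdsWithin_le_nhds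
  · filter_upwards [Ioo_mem_nhdsLT (show (1 / 2 : ℝ) < 1 by norm_num)] with x hx s hs
    have hs0 : 0 < s := hδ.trans_le hs.1
    rw [abs_of_nonneg (P1_nonneg (by linarith [hx.1]) hx.2.le hs0.le hs.2)]
    refine (P1_le hx.1.le hx.2.le hs0 hs.2).trans ?_
    have : cos s ≤ cos δ' :=
      cos_le_cos_of_nonneg_of_le_pi (le_min hδ.le pi_pos.le) hs.2 ((min_le_left _ _).trans hs.1)
    have : 0 ≤ 1 - x := by linarith [hx.2]
    gcongr

/-- `P₁(x,·)` is an approximate identity at `0` as `x → 1⁻`: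
`∫₀^π P₁(x,s) φ(s) ds → (2/π) φ(0)` for every continuous `φ` on `[0,π]`. -/
theorem P1_approximate_identity (φ : ℝ → ℝ) (hφ : ContinuousOn φ (Set.Icc 0 π)) :
    Tendsto (fun x => ∫ s in (0 : ℝ)..π, P1 x s * φ s)
      (nhdsWithin 1 (Set.Iio 1)) (𝓝 ((2 / π) * φ 0)) := by
  have hπ := pi_pos
  refine tendsto_intervalIntegral_mul_of_peak hπ.le (by positivity) ?_ ?_
    (fun δ hδ => by simpa only [zero_add] using tendstoUniformlyOn_P1 hδ) tendsto_integral_P1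
    (hφ.intervalIntegrable_of_Icc hπ.le) ?_
  · filter_upwards [Ioo_mem_nhdsLT (show (0 : ℝ) < 1 by norm_num)] with x hx s hs
    exact P1_nonneg hx.1.le hx.2.le hs.1.le hs.2
  · filter_upwards [Ioo_mem_nhdsLT (show (0 : ℝ) < 1 by norm_num)] with x hx
    exact (continuous_P1 hx.1.le hx.2).aestronglyMeasurable
  · exact (hφ 0 ⟨le_rfl, hπ.le⟩).tendsto.mono_left (nhdsWithin_le_of_mem (Icc_mem_nhdsGT hπ))
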